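/- arXiv:1106.4443 — 3 statements merged into one kernel-verified Lean document; each statement's English description precedes it below -/
import Mathlib

section
/- Let φ = ψ → χ be a bracketed implication on the variables p_1, …, p_n in which ψ involves p_1, …, p_r and χ involves p_{r+1}, …, p_n (with 1 ≤ r ≤ n−1). For 1 ≤ i < j ≤ n let ν_{i,j} be the valuation assigning false to p_i and p_j and true to all other variables. Then for every i < r the truth value of φ under ν_{i,n} is false, while the truth value of φ under ν_{r,n} is true. In particular, the index r at which the outermost implication of φ splits is determined by the propositional function of φ. -/
/-- Bracketed implications: `BImp n` is the type of well-formed bracketings of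
`p₁ → p₂ → ⋯ → pₙ` (1-indexed variables correspond to 0-indexed `Fin n`). -/
inductive BImp : ℕ → Type where
  | leaf : BImp 1
  | node : {i j : ℕ} → BImp i → BImp j → BImp (i + j)

/-- Evaluation of a bracketed implication under a valuation `ν : Fin n → Bool`:
a leaf evaluates to the value of its variable, and a node `ψ → χ` evaluates to the
Boolean implication, with `ψ` evaluated on the first coordinates and `χ` on the last. -/
def BImp.eval : {n : ℕ} → BImp n → (Fin n → Bool) → Bool
  | _, .leaf, ν => ν 0
  | _, .node ψ χ, ν =>
      !(ψ.eval fun k => ν (Fin.castAdd _ k)) || χ.eval fun k => ν (Fin.natAdd _ k)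

lemma BImp.one_le : ∀ {n : ℕ}, BImp n → 1 ≤ n := by
  intro n φ; induction φ with
  | leaf => omega
  | node ψ χ ih1 ih2 => omega

lemma eval_all_true : ∀ {n : ℕ} (φ : BImp n) (ν : Fin n → Bool),
    (∀ k, ν k = true) → φ.eval ν = true := by
  intro n φ
  induction φ with
  | leaf => intro ν h; simpa [BImp.eval] using h 0
  | node ψ χ ihψ ihχ =>
      intro ν h
      simp only [BImp.eval]
      rw [ihχ _ fun k => h _]
      simp

lemma eval_false_last : ∀ {n : ℕ} (φ : BImp n) (ν : Fin n → Bool),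
    (∀ k : Fin n, ν k = decide ((k : ℕ) ≠ n - 1)) → φ.eval ν = false := by
  intro n φ
  induction φ with
  | leaf => intro ν h; simpa [BImp.eval] using h 0
  | @node i j ψ χ ihψ ihχ =>
      intro ν h
      have hi := ψ.one_le
      have hj := χ.one_le
      simp only [BImp.eval]
      rw [eval_all_true ψ _ (fun k => by
        rw [h]; simp only [Fin.coe_castAdd]
        have := k.isLt; simp; omega)]
      rw [ihχ _ (fun k => by
        rw [h]; simp only [Fin.coe_natAdd]
        have := k.isLt
        rcases eq_or_ne (k : ℕ) (j - 1) with he | he <;> simp [he] <;> omega)]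
      simp

lemma eval_false_mid : ∀ {n : ℕ} (φ : BImp n) (a : ℕ), a < n - 1 →
    ∀ ν : Fin n → Bool, (∀ k : Fin n, ν k = decide ((k : ℕ) ≠ a)) → φ.eval ν = true := by
  intro n φ
  induction φ with
  | leaf => intro a ha; omega
  | @node i j ψ χ ihψ ihχ =>
      intro a ha ν h
      have hi := ψ.one_le
      have hj := χ.one_le
      simp only [BImp.eval]
      rcases lt_or_ge a i with hai | hai
      · rw [eval_all_true χ _ (fun k => by
          rw [h]; simp only [Fin.coe_natAdd]; simp; omega)]
        simp
      · rw [eval_all_true ψ _ (fun k => by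
          rw [h]; simp only [Fin.coe_castAdd]
          have := k.isLt; simp; omega)]
        rw [ihχ (a - i) (by omega) _ (fun k => by
          rw [h]; simp only [Fin.coe_natAdd]
          rcases eq_or_ne (k : ℕ) (a - i) with he | he <;> simp [he] <;> omega)]
        simp

/-- Let `φ = ψ → χ` with `ψ` on `p_1, …, p_r` and `χ` on `p_{r+1}, …, p_n`
(`n = r + s`).  For the valuation `ν_{i,n}` which is false exactly at `p_i` and `p_n`
(0-indexed: positions `i - 1` and `n - 1`), the value of `φ` under `ν_{i,n}` is false
for every `1 ≤ i < r`, while the value of `φ` under `ν_{r,n}` is true.  Hence the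
splitting index `r` is determined by the propositional function of `φ`. -/
theorem bracketed_implication_split_detect (r s : ℕ) (hr : 1 ≤ r) (hs : 1 ≤ s)
    (ψ : BImp r) (χ : BImp s) :
    (∀ i : ℕ, 1 ≤ i → i < r →
      (BImp.node ψ χ).eval
        (fun k => decide (k.val ≠ i - 1 ∧ k.val ≠ r + s - 1)) = false) ∧
    (BImp.node ψ χ).eval
        (fun k => decide (k.val ≠ r - 1 ∧ k.val ≠ r + s - 1)) = true := by
  constructor
  · intro i hi hir
    simp only [BImp.eval]
    rw [eval_false_mid ψ (i - 1) (by omega) _ (fun k => by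
      simp only [Fin.coe_castAdd]
      have := k.isLt
      rcases eq_or_ne (k : ℕ) (i - 1) with he | he <;> simp [he] <;> omega)]
    rw [eval_false_last χ _ (fun k => by
      simp only [Fin.coe_natAdd]
      have := k.isLt
      rcases eq_or_ne (k : ℕ) (s - 1) with he | he <;> simp [he] <;> omega)]
    simp
  · simp only [BImp.eval]
    rw [eval_false_last ψ _ (fun k => by
      simp only [Fin.coe_castAdd]
      have := k.isLt
      rcases eq_or_ne (k : ℕ) (r - 1) with he | he <;> simp [he] <;> omega)]
    simp
end

section
/- Let f_n be the total number of pairs (φ, ν), where φ is a bracketed implication on n distinct variables and ν : Fin n → Bool is a valuation under which φ evaluates to false (that is, f_n is the number of rows with value 'false' in the truth tables of all bracketed implications on n variables). Then f_0 = 0, f_1 = 1, and for all n ≥ 2, f_n = Σ_{i=1}^{n−1} (2^i C_i − f_i) · f_{n−i}, where C_i = (1/i)·binomial(2i−2, i−1) is the Catalan number counting bracketed implications on i variables. -/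
/-- The Catalan number `C n = (1/n) * binomial (2n-2) (n-1)` (the division is exact;
`C 0 = 0`). -/
def catalanC (n : ℕ) : ℕ := (2 * n - 2).choose (n - 1) / n

/-- `falseRows n` is the number of pairs `(φ, ν)` of a bracketed implication on `n`
variables and a valuation under which it evaluates to false, i.e. the number of rows
with value "false" in the truth tables of all bracketed implications on `n` variables. -/
noncomputable def falseRows (n : ℕ) : ℕ :=
  Nat.card {p : BImp n × (Fin n → Bool) // p.1.eval p.2 = false}

/-! Splitting a formula at its main connective identifies bracketed implications on `n ≠ 1`
variables with pairs `(ψ, χ)` on `i + j = n` variables. Since `ψ → χ` is false exactly when `ψ`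
is true and `χ` is false, its false rows number `(2^i - f(ψ)) f(χ)`, where `f(ψ)` counts the false
rows of `ψ`; summing over the `C_i` formulas `ψ` and all `χ` gives the recurrence. The same
splitting yields the Catalan recurrence for the number of formulas. -/

open Finset

namespace BImp

theorem one_le_s4 {n : ℕ} (φ : BImp n) : 1 ≤ n := by
  induction φ <;> omega

instance : IsEmpty (BImp 0) := ⟨fun φ => absurd φ.one_le_s4 (by decide)⟩

theorem heq_leaf {n : ℕ} (φ : BImp n) (hn : n = 1) : φ ≍ leaf := by
  cases φ with
  | leaf => rfl
  | node ψ χ => have := ψ.one_le_s4; have := χ.one_le_s4; omega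

instance : Unique (BImp 1) where
  default := leaf
  uniq φ := eq_of_heq (heq_leaf φ rfl)

/-- Splitting a bracketed implication at its main connective. -/
def equivSigmaAntidiagonal {n : ℕ} (hn : n ≠ 1) :
    BImp n ≃ Σ p : antidiagonal n, BImp p.1.1 × BImp p.1.2 where
  toFun
    | .leaf => absurd rfl hn
    | .node (i := i) (j := j) ψ χ => ⟨⟨(i, j), mem_antidiagonal.2 rfl⟩, ψ, χ⟩
  invFun | ⟨⟨_, h⟩, ψ, χ⟩ => mem_antidiagonal.1 h ▸ node ψ χ
  left_inv φ := by cases φ <;> trivial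
  right_inv := by
    rintro ⟨⟨⟨i, j⟩, h⟩, ψ, χ⟩
    obtain rfl := mem_antidiagonal.1 h
    rfl

instance finite : ∀ n, Finite (BImp n)
  | 0 => inferInstance
  | 1 => inferInstance
  | n + 2 =>
    have (p : antidiagonal (n + 2)) : Finite (BImp p.1.1 × BImp p.1.2) := by
      obtain ⟨⟨_ | i, _ | j⟩, h⟩ := p
      all_goals try infer_instance
      have := mem_antidiagonal.1 h
      have := finite (i + 1)
      have := finite (j + 1)
      infer_instance
    Finite.of_equiv _ (equivSigmaAntidiagonal (by omega)).symm

noncomputable instance (n : ℕ) : Fintype (BImp n) := .ofFinite _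

theorem sum_eq_sum_antidiagonal {M : Type*} [AddCommMonoid M] (g : ∀ m, BImp m → M) {n : ℕ}
    (hn : n ≠ 1) :
    ∑ φ : BImp n, g n φ =
      ∑ p ∈ antidiagonal n, ∑ ψ : BImp p.1, ∑ χ : BImp p.2, g _ (node ψ χ) := by
  rw [← (equivSigmaAntidiagonal hn).symm.sum_comp, Fintype.sum_sigma,
    ← sum_coe_sort (antidiagonal n)]
  refine Fintype.sum_congr _ _ ?_
  rintro ⟨⟨i, j⟩, h⟩
  obtain rfl := mem_antidiagonal.1 h
  exact Fintype.sum_prod_type _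

theorem card_add_one (n : ℕ) : Fintype.card (BImp (n + 1)) = catalan n := by
  induction n using Nat.strong_induction_on with
  | _ n ih =>
    cases n with
    | zero => exact (Fintype.card_unique (α := BImp 1)).trans catalan_zero.symm
    | succ m =>
      have hsplit :=
        sum_eq_sum_antidiagonal (fun m (_ : BImp m) => 1) (n := m + 1 + 1) (by omega)
      simp only [sum_const, card_univ, smul_eq_mul, mul_one] at hsplit
      rw [hsplit, Nat.sum_antidiagonal_succ, Nat.sum_antidiagonal_succ', catalan_succ']
      simp only [Fintype.card_of_isEmpty, zero_mul, mul_zero, zero_add]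
      refine sum_congr rfl fun p hp => ?_
      have := mem_antidiagonal.1 hp
      rw [ih p.1 (by omega), ih p.2 (by omega)]

theorem card_eq_catalanC (n : ℕ) : Fintype.card (BImp n) = catalanC n := by
  cases n with
  | zero => rw [Fintype.card_of_isEmpty]; rfl
  | succ n =>
    rw [card_add_one, catalanC, catalan_eq_centralBinom_div, Nat.centralBinom]
    congr 2

def rowCount {n : ℕ} (φ : BImp n) (b : Bool) : ℕ :=
  Fintype.card {ν // φ.eval ν = b}

theorem rowCount_true_add_rowCount_false {n : ℕ} (φ : BImp n) :
    φ.rowCount true + φ.rowCount false = 2 ^ n := by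
  simpa [rowCount] using Fintype.card_congr (Equiv.sumCompl fun ν => φ.eval ν = true)

theorem eval_node_append {i j : ℕ} (ψ : BImp i) (χ : BImp j) (a : Fin i → Bool)
    (b : Fin j → Bool) : (node ψ χ).eval (Fin.append a b) = (!ψ.eval a || χ.eval b) := by
  simp [eval]

theorem rowCount_node_false {i j : ℕ} (ψ : BImp i) (χ : BImp j) :
    (node ψ χ).rowCount false = ψ.rowCount true * χ.rowCount false := by
  rw [rowCount, rowCount, rowCount, ← Fintype.card_prod]
  refine Fintype.card_congr ((Equiv.subtypeEquiv (Fin.appendEquiv i j) fun c => ?_).symm.trans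
    Equiv.subtypeProdEquivProd)
  change _ ↔ (node ψ χ).eval (Fin.append c.1 c.2) = false
  simp [eval_node_append]

end BImp

theorem falseRows_eq_sum_rowCount (n : ℕ) : falseRows n = ∑ φ : BImp n, φ.rowCount false := by
  rw [falseRows, Nat.card_eq_fintype_card,
    Fintype.card_congr (Equiv.subtypeProdEquivSigmaSubtype fun (φ : BImp n) ν => φ.eval ν = false),
    Fintype.card_sigma]
  rfl

theorem falseRows_zero : falseRows 0 = 0 := by
  simp [falseRows_eq_sum_rowCount]

theorem falseRows_one : falseRows 1 = 1 := by
  rw [falseRows_eq_sum_rowCount, Fintype.sum_unique]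
  decide

theorem sum_rowCount_true (n : ℕ) :
    ∑ φ : BImp n, (φ.rowCount true : ℤ) = 2 ^ n * catalanC n - falseRows n := by
  rw [eq_sub_iff_add_eq, falseRows_eq_sum_rowCount, ← BImp.card_eq_catalanC]
  push_cast
  simp only [← sum_add_distrib, ← Nat.cast_add, BImp.rowCount_true_add_rowCount_false]
  simp [mul_comm]

theorem falseRows_eq_sum_antidiagonal {n : ℕ} (hn : n ≠ 1) :
    (falseRows n : ℤ) =
      ∑ p ∈ antidiagonal n, ((2 ^ p.1 * catalanC p.1 : ℤ) - falseRows p.1) * falseRows p.2 := by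
  rw [falseRows_eq_sum_rowCount, Nat.cast_sum,
    BImp.sum_eq_sum_antidiagonal (fun _ φ => (φ.rowCount false : ℤ)) hn]
  refine sum_congr rfl fun p _ => ?_
  simp only [BImp.rowCount_node_false, Nat.cast_mul, ← sum_mul_sum, sum_rowCount_true,
    falseRows_eq_sum_rowCount, Nat.cast_sum]

/-- Recurrence for the number `f n` of false rows in the truth tables of all
bracketed implications on `n` variables:
`f 0 = 0`, `f 1 = 1`, and `f n = ∑_{i=1}^{n-1} (2^i C i - f i) * f (n - i)` for `n ≥ 2`. -/
theorem falseRows_recurrence :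
    falseRows 0 = 0 ∧ falseRows 1 = 1 ∧
    ∀ n : ℕ, 2 ≤ n →
      (falseRows n : ℤ) =
        ∑ i ∈ Finset.Icc 1 (n - 1),
          ((2 ^ i * catalanC i : ℤ) - falseRows i) * falseRows (n - i) := by
  refine ⟨falseRows_zero, falseRows_one, fun n hn => ?_⟩
  rw [falseRows_eq_sum_antidiagonal (by omega), Nat.sum_antidiagonal_eq_sum_range_succ
    fun i j => ((2 ^ i * catalanC i : ℤ) - falseRows i) * falseRows j]
  symm
  refine sum_subset (fun i hi => by simp only [mem_Icc, mem_range] at hi ⊢; omega)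
    fun i hi hi' => ?_
  -- the end terms vanish because `falseRows 0 = 0` and `catalanC 0 = 0` (division by zero)
  obtain rfl | rfl : i = 0 ∨ i = n := by simp only [mem_Icc, mem_range] at hi hi'; omega
  · simp [falseRows_zero, catalanC]
  · simp [falseRows_zero]
end

section
/- Let (f_n) be the integer sequence defined by f_0 = 0, f_1 = 1 and f_n = Σ_{i=1}^{n−1} (2^i C_i − f_i) f_{n−i} for n ≥ 2, where C_i = (1/i)·binomial(2i−2, i−1). Then for every real x with 0 ≤ x < 1/8, the series F(x) = Σ_{n≥1} f_n x^n converges and satisfies the quadratic equation 2·F(x)² + F(x)·(1 + √(1 − 8x)) − 2x = 0. -/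
open Finset

lemma catalanC_succ (n : ℕ) : catalanC (n + 1) = catalan n := by
  rw [catalanC, catalan_eq_centralBinom_div, Nat.centralBinom, Nat.add_sub_cancel,
    show 2 * (n + 1) - 2 = 2 * n by omega]

lemma Finset.Nat.sum_antidiagonal_eq_sum_Icc {R : Type*} [NonUnitalNonAssocSemiring R]
    {u v : ℕ → R} (hu : u 0 = 0) (hv : v 0 = 0) (n : ℕ) :
    ∑ p ∈ antidiagonal n, u p.1 * v p.2 = ∑ i ∈ Icc 1 (n - 1), u i * v (n - i) := by
  rw [Nat.sum_antidiagonal_eq_sum_range_succ_mk]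
  refine (sum_subset (fun i hi => by simp only [mem_Icc] at hi; simp only [mem_range]; omega)
    fun i hi hi' => ?_).symm
  simp only [mem_range, mem_Icc] at hi hi'
  obtain rfl | rfl : i = 0 ∨ i = n := by omega
  · simp [hu]
  · simp [hv]

lemma summable_norm_mul_pow_of_abs_le_pow {u : ℕ → ℝ} {r x : ℝ} (hu : ∀ n, |u n| ≤ r ^ n)
    (hx : |x| * r < 1) : Summable fun n => ‖u n * x ^ n‖ := by
  have hr : 0 ≤ r := by simpa using (abs_nonneg _).trans (hu 1)
  refine .of_nonneg_of_le (fun n => norm_nonneg _) (fun n => ?_)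
    (summable_geometric_of_lt_one (by positivity) hx)
  rw [Real.norm_eq_abs, abs_mul, abs_pow, mul_pow, mul_comm]
  exact mul_le_mul_of_nonneg_left (hu n) (by positivity)

lemma hasSum_pow_of_eq_sum_Icc {u v w : ℕ → ℝ} {x : ℝ} (hu0 : u 0 = 0) (hv0 : v 0 = 0)
    (hw : ∀ n, 2 ≤ n → w n = ∑ i ∈ Icc 1 (n - 1), u i * v (n - i))
    (hu : Summable fun n => ‖u n * x ^ n‖) (hv : Summable fun n => ‖v n * x ^ n‖) :
    HasSum (fun n => w n * x ^ n)
      (w 0 + w 1 * x + (∑' n, u n * x ^ n) * ∑' n, v n * x ^ n) := by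
  have hcoeff : ∀ n, ∑ p ∈ antidiagonal n, u p.1 * x ^ p.1 * (v p.2 * x ^ p.2) =
      (∑ i ∈ Icc 1 (n - 1), u i * v (n - i)) * x ^ n := fun n => by
    rw [← Nat.sum_antidiagonal_eq_sum_Icc hu0 hv0, sum_mul]
    refine sum_congr rfl fun p hp => ?_
    rw [← mem_antidiagonal.mp hp, pow_add]
    ring
  have hprod := (summable_norm_sum_mul_antidiagonal_of_summable_norm hu hv).of_norm.hasSum
  rw [← tsum_mul_tsum_eq_tsum_sum_antidiagonal_of_summable_norm hu hv] at hprod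
  simp only [hcoeff] at hprod
  have htail : HasSum (fun n => w (n + 2) * x ^ (n + 2))
      ((∑' n, u n * x ^ n) * ∑' n, v n * x ^ n) := by
    have h := (hasSum_nat_add_iff' 2).mpr hprod
    simp only [sum_range_succ, sum_range_zero, zero_tsub, Nat.sub_self,
      Icc_eq_empty_of_lt one_pos, sum_empty, zero_mul, zero_add, sub_zero] at h
    simpa only [hw _ (Nat.le_add_left 2 _)] using h
  have h := (hasSum_nat_add_iff (f := fun n => w n * x ^ n) 2).mp htail
  rwa [sum_range_succ, sum_range_one, pow_zero, pow_one, mul_one, add_comm] at h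

def twoPowCatalan (n : ℕ) : ℕ := 2 ^ n * catalanC n

lemma twoPowCatalan_zero : twoPowCatalan 0 = 0 := by simp [twoPowCatalan, catalanC]

lemma twoPowCatalan_succ (n : ℕ) : twoPowCatalan (n + 1) = 2 ^ (n + 1) * catalan n := by
  rw [twoPowCatalan, catalanC_succ]

lemma twoPowCatalan_one : twoPowCatalan 1 = 2 := by simp [twoPowCatalan_succ]

lemma twoPowCatalan_le (n : ℕ) : twoPowCatalan n ≤ 8 ^ n := by
  cases n with
  | zero => simp [twoPowCatalan_zero]
  | succ n =>
    have hcat : catalan n ≤ 4 ^ n := calc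
      catalan n ≤ (n + 1) * catalan n := Nat.le_mul_of_pos_left _ n.succ_pos
      _ = n.centralBinom := succ_mul_catalan_eq_centralBinom n
      _ ≤ 4 ^ n := Nat.centralBinom_le_four_pow n
    calc twoPowCatalan (n + 1) = 2 ^ (n + 1) * catalan n := twoPowCatalan_succ n
      _ ≤ 2 ^ (n + 1) * 4 ^ (n + 1) := by
        gcongr
        exact hcat.trans (Nat.pow_le_pow_right (by norm_num) n.le_succ)
      _ = 8 ^ (n + 1) := by rw [← mul_pow]; norm_num

lemma twoPowCatalan_eq_sum_Icc {n : ℕ} (hn : 2 ≤ n) :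
    twoPowCatalan n = ∑ i ∈ Icc 1 (n - 1), twoPowCatalan i * twoPowCatalan (n - i) := by
  obtain ⟨m, rfl⟩ : ∃ m, n = m + 2 := ⟨n - 2, by omega⟩
  rw [← Nat.sum_antidiagonal_eq_sum_Icc (R := ℕ) twoPowCatalan_zero twoPowCatalan_zero]
  rw [Nat.sum_antidiagonal_succ, Nat.sum_antidiagonal_succ']
  simp only [twoPowCatalan_zero, zero_mul, mul_zero, zero_add, twoPowCatalan_succ,
    catalan_succ', mul_sum, sum_const_zero]
  refine sum_congr rfl fun p hp => ?_
  rw [← mem_antidiagonal.mp hp]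
  ring

lemma cast_twoPowCatalan {R : Type*} [CommSemiring R] (n : ℕ) :
    (twoPowCatalan n : R) = 2 ^ n * catalanC n := by
  simp [twoPowCatalan]

noncomputable def twoPowCatalanSeries (x : ℝ) : ℝ := ∑' n, (twoPowCatalan n : ℝ) * x ^ n

lemma summable_norm_twoPowCatalan_mul_pow {x : ℝ} (hx : |x| < 1 / 8) :
    Summable fun n => ‖(twoPowCatalan n : ℝ) * x ^ n‖ :=
  summable_norm_mul_pow_of_abs_le_pow (r := 8)
    (fun n => by rw [Nat.abs_cast]; exact_mod_cast twoPowCatalan_le n) (by linarith)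

lemma twoPowCatalanSeries_eq {x : ℝ} (hx : |x| < 1 / 8) :
    twoPowCatalanSeries x = 2 * x + twoPowCatalanSeries x ^ 2 := by
  have hs := summable_norm_twoPowCatalan_mul_pow hx
  have h := hasSum_pow_of_eq_sum_Icc (u := fun n => (twoPowCatalan n : ℝ))
    (w := fun n => (twoPowCatalan n : ℝ))
    (by simp [twoPowCatalan_zero]) (by simp [twoPowCatalan_zero])
    (fun n hn => by exact_mod_cast twoPowCatalan_eq_sum_Icc hn) hs hs
  simpa [twoPowCatalanSeries, twoPowCatalan_zero, twoPowCatalan_one, sq] using h.tsum_eq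

lemma twoPowCatalanSeries_zero : twoPowCatalanSeries 0 = 0 := by
  have h : ∀ n, (twoPowCatalan n : ℝ) * 0 ^ n = 0 := by rintro (_ | n) <;> simp [twoPowCatalan_zero]
  simp only [twoPowCatalanSeries, h, tsum_zero]

lemma continuousOn_twoPowCatalanSeries {r : ℝ} (hr0 : 0 ≤ r) (hr : r < 1 / 8) :
    ContinuousOn twoPowCatalanSeries (Set.Icc 0 r) := by
  refine continuousOn_tsum (fun n => (continuous_const.mul (continuous_pow n)).continuousOn)
    (summable_norm_twoPowCatalan_mul_pow (abs_lt.mpr ⟨by linarith, hr⟩)) fun n t ht => ?_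
  rw [norm_mul, norm_mul, norm_pow, norm_pow, Real.norm_of_nonneg ht.1, Real.norm_of_nonneg hr0]
  exact mul_le_mul_of_nonneg_left (pow_le_pow_left₀ ht.1 ht.2 n) (norm_nonneg _)

lemma twoPowCatalanSeries_le_half {x : ℝ} (hx0 : 0 ≤ x) (hx : x < 1 / 8) :
    twoPowCatalanSeries x ≤ 1 / 2 := by
  by_contra! hlt
  obtain ⟨t, ⟨ht0, htx⟩, hhalf⟩ := intermediate_value_Icc hx0
    (continuousOn_twoPowCatalanSeries hx0 hx)
    ⟨twoPowCatalanSeries_zero.trans_le (by norm_num), hlt.le⟩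
  have := twoPowCatalanSeries_eq (abs_lt.mpr ⟨by linarith, htx.trans_lt hx⟩)
  rw [hhalf] at this
  linarith

lemma sqrt_one_sub_eight_mul_eq {x : ℝ} (hx0 : 0 ≤ x) (hx : x < 1 / 8) :
    √(1 - 8 * x) = 1 - 2 * twoPowCatalanSeries x := by
  have hquad := twoPowCatalanSeries_eq (abs_lt.mpr ⟨by linarith, hx⟩)
  rw [show 1 - 8 * x = (1 - 2 * twoPowCatalanSeries x) ^ 2 by linear_combination 4 * hquad,
    Real.sqrt_sq (by linarith [twoPowCatalanSeries_le_half hx0 hx])]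

lemma nonneg_and_le_twoPowCatalan {f : ℕ → ℤ} (hf0 : f 0 = 0) (hf1 : f 1 = 1)
    (hf : ∀ n : ℕ, 2 ≤ n →
      f n = ∑ i ∈ Icc 1 (n - 1), ((2 : ℤ) ^ i * catalanC i - f i) * f (n - i))
    (n : ℕ) : 0 ≤ f n ∧ f n ≤ twoPowCatalan n := by
  induction n using Nat.strong_induction_on with
  | _ n ih =>
    rcases lt_or_ge n 2 with hn | hn
    · interval_cases n <;> simp [hf0, hf1, twoPowCatalan_zero, twoPowCatalan_one]
    have hterm : ∀ i ∈ Icc 1 (n - 1),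
        0 ≤ ((2 : ℤ) ^ i * catalanC i - f i) * f (n - i) ∧
        ((2 : ℤ) ^ i * catalanC i - f i) * f (n - i) ≤ twoPowCatalan i * twoPowCatalan (n - i) := by
      intro i hi
      rw [mem_Icc] at hi
      obtain ⟨hfi0, hfi⟩ := ih i (by omega)
      obtain ⟨hfj0, hfj⟩ := ih (n - i) (by omega)
      rw [← cast_twoPowCatalan]
      exact ⟨mul_nonneg (by linarith) hfj0, mul_le_mul (by linarith) hfj hfj0 (by positivity)⟩
    rw [hf n hn]
    refine ⟨sum_nonneg fun i hi => (hterm i hi).1, (sum_le_sum fun i hi => (hterm i hi).2).trans ?_⟩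
    exact_mod_cast (twoPowCatalan_eq_sum_Icc hn).ge

/-- For `0 ≤ x < 1/8`, the series `F(x) = Σ_{n≥1} f n x^n` converges and satisfies
`2 F(x)² + F(x)(1 + √(1-8x)) - 2x = 0`.  (The `n = 0` term below is `0`.) -/
theorem genfun_F_quadratic (f : ℕ → ℤ) (hf0 : f 0 = 0) (hf1 : f 1 = 1)
    (hf : ∀ n : ℕ, 2 ≤ n →
      f n = ∑ i ∈ Finset.Icc 1 (n - 1),
        ((2 : ℤ) ^ i * catalanC i - f i) * f (n - i))
    (x : ℝ) (hx0 : 0 ≤ x) (hx : x < 1 / 8) :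
    ∃ F : ℝ, HasSum (fun n : ℕ => (f n : ℝ) * x ^ n) F ∧
      2 * F ^ 2 + F * (1 + Real.sqrt (1 - 8 * x)) - 2 * x = 0 := by
  have hxabs : |x| < 1 / 8 := abs_lt.mpr ⟨by linarith, hx⟩
  have hbound : ∀ n, |(f n : ℝ)| ≤ 8 ^ n ∧ |(twoPowCatalan n : ℝ) - f n| ≤ 8 ^ n := fun n => by
    obtain ⟨h0, h1⟩ := nonneg_and_le_twoPowCatalan hf0 hf1 hf n
    have h0' : (0 : ℝ) ≤ f n := by exact_mod_cast h0
    have h1' : (f n : ℝ) ≤ twoPowCatalan n := by exact_mod_cast h1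
    have h8 : (twoPowCatalan n : ℝ) ≤ 8 ^ n := by exact_mod_cast twoPowCatalan_le n
    constructor <;> rw [abs_le] <;> constructor <;> linarith
  have hFs := summable_norm_mul_pow_of_abs_le_pow (fun n => (hbound n).1) (by linarith)
  have hGs := summable_norm_mul_pow_of_abs_le_pow (fun n => (hbound n).2) (by linarith)
  set F := ∑' n, (f n : ℝ) * x ^ n
  refine ⟨F, hFs.of_norm.hasSum, ?_⟩
  have hdiff : ∑' n, ((twoPowCatalan n : ℝ) - f n) * x ^ n = twoPowCatalanSeries x - F := by
    simp only [sub_mul]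
    exact (summable_norm_twoPowCatalan_mul_pow hxabs).of_norm.tsum_sub hFs.of_norm
  have hF : F = x + (twoPowCatalanSeries x - F) * F := by
    have h := hasSum_pow_of_eq_sum_Icc (u := fun n => (twoPowCatalan n : ℝ) - f n)
      (w := fun n => (f n : ℝ))
      (by simp [twoPowCatalan_zero, hf0]) (by simp [hf0])
      (fun n hn => by rw [hf n hn]; push_cast [cast_twoPowCatalan]; rfl) hGs hFs
    simpa [hf0, hf1, hdiff] using h.tsum_eq
  rw [sqrt_one_sub_eight_mul_eq hx0 hx]
  linear_combination 2 * hF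
end
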